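/- arXiv:2201.07566 — 3 statements merged into one kernel-verified Lean document; each statement's English description precedes it below -/
import Mathlib

section
/- Let ω be a discrete control, 0 ≤ k < l ≤ N, and let s = (s_0 = k, s_1, ..., s_m, s_{m+1} = l) be an increasing subsequence of {k, ..., l} of length #s = m ≥ 1. Then there exists an integer j* with 1 ≤ j* ≤ m such that ω_{s_{j*−1}, s_{j*+1}} ≤ (2/m) ω_{k,l}. -/
noncomputable section

/-- `s` is an increasing subsequence (partition) of `{k, …, l}` from `k` to `l`. -/
def IsPart (k l : ℕ) (s : List ℕ) : Prop :=
  s.Chain' (· < ·) ∧ s.head? = some k ∧ s.getLast? = some l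

/-- Supremum over partitions of the sums of `p`-th powers of increments of a triangular array. -/
def pVarSum {E : Type*} [NormedAddCommGroup E] (p : ℝ) (Ξ : ℕ → ℕ → E) (k l : ℕ) : ℝ :=
  sSup { x : ℝ | ∃ s : List ℕ, IsPart k l s ∧
    x = ((s.zip s.tail).map fun ab => ‖Ξ ab.1 ab.2‖ ^ p).sum }

/-- The `p`-variation of a triangular array over `[k,l]`. -/
def pVar {E : Type*} [NormedAddCommGroup E] (p : ℝ) (Ξ : ℕ → ℕ → E) (k l : ℕ) : ℝ :=
  pVarSum p Ξ k l ^ (1 / p)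

/-- The `p`-variation of a time series over `[k,l]`. -/
def pVarSeq {E : Type*} [NormedAddCommGroup E] (p : ℝ) (x : ℕ → E) (k l : ℕ) : ℝ :=
  pVar p (fun a b => x b - x a) k l

/-- A discrete control on `{0, …, N}`: nonnegative, vanishing on the diagonal, superadditive. -/
def IsControl (N : ℕ) (ω : ℕ → ℕ → ℝ) : Prop :=
  (∀ k l, k ≤ l → l ≤ N → 0 ≤ ω k l) ∧
  (∀ k, k ≤ N → ω k k = 0) ∧
  (∀ k l m, k < l → l < m → m ≤ N → ω k l + ω l m ≤ ω k m)

/-- Along any partition `s_0 = k < s_1 < ⋯ < s_m < s_{m+1} = l` there is an index `j*`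
with `ω_{s_{j*-1}, s_{j*+1}} ≤ (2/m) ω_{k,l}`. -/
theorem exists_coarsening_point (N : ℕ) (ω : ℕ → ℕ → ℝ) (hω : IsControl N ω)
    (k l : ℕ) (hkl : k < l) (hlN : l ≤ N)
    (m : ℕ) (hm : 1 ≤ m) (s : ℕ → ℕ)
    (hmono : ∀ i : ℕ, i ≤ m → s i < s (i + 1))
    (hs0 : s 0 = k) (hsl : s (m + 1) = l) :
    ∃ j : ℕ, 1 ≤ j ∧ j ≤ m ∧
      ω (s (j - 1)) (s (j + 1)) ≤ (2 / (m : ℝ)) * ω k l := by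
  obtain ⟨hpos, hdiag, hsup⟩ := hω
  -- strict monotonicity of `s` on `{0, …, m+1}`
  have hsmono : ∀ j : ℕ, j ≤ m + 1 → ∀ i : ℕ, i < j → s i < s j := by
    intro j
    induction j with
    | zero => intro _ i hi; omega
    | succ n ih =>
      intro hj i hi
      rcases Nat.lt_succ_iff_lt_or_eq.mp hi with h | h
      · exact lt_trans (ih (by omega) i h) (hmono n (by omega))
      · subst h; exact hmono i (by omega)
  have hsle : ∀ i j : ℕ, i ≤ j → j ≤ m + 1 → s i ≤ s j := by
    intro i j hij hj
    rcases eq_or_lt_of_le hij with h | h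
    · subst h; exact le_refl _
    · exact le_of_lt (hsmono j hj i h)
  have hsN : ∀ i, i ≤ m + 1 → s i ≤ N := by
    intro i hi
    have h1 : s i ≤ s (m + 1) := hsle i (m + 1) hi (le_refl _)
    rw [hsl] at h1; exact le_trans h1 hlN
  -- generalized superadditivity
  have hsup' : ∀ a b c : ℕ, a ≤ b → b ≤ c → c ≤ N → ω a b + ω b c ≤ ω a c := by
    intro a b c hab hbc hcN
    rcases eq_or_lt_of_le hab with h | h
    · subst h; rw [hdiag a (le_trans hbc hcN)]; simp
    rcases eq_or_lt_of_le hbc with h2 | h2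
    · subst h2; rw [hdiag b hcN]; simp
    exact hsup a b c h h2 hcN
  have hmono1 : ∀ a b c : ℕ, a ≤ b → b ≤ c → c ≤ N → ω a b ≤ ω a c := by
    intro a b c hab hbc hcN
    have := hsup' a b c hab hbc hcN
    have := hpos b c hbc hcN
    linarith
  have hmono2 : ∀ a b c : ℕ, a ≤ b → b ≤ c → c ≤ N → ω b c ≤ ω a c := by
    intro a b c hab hbc hcN
    have := hsup' a b c hab hbc hcN
    have := hpos a b hab (le_trans hbc hcN)
    linarith
  -- the chain estimate, split by parity
  have key : ∀ n : ℕ, n ≤ m →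
      (Even n → (∑ j ∈ Finset.range n, ω (s j) (s (j + 2))) ≤ ω (s 0) (s n) + ω (s 1) (s (n + 1))) ∧
      (Odd n → (∑ j ∈ Finset.range n, ω (s j) (s (j + 2))) ≤ ω (s 0) (s (n + 1)) + ω (s 1) (s n)) := by
    intro n
    induction n with
    | zero =>
      intro _
      refine ⟨fun _ => ?_, fun h => absurd h (by simp)⟩
      simp only [Finset.range_zero, Finset.sum_empty]
      have h1 := hpos (s 0) (s 0) (le_refl _) (hsN 0 (by omega))
      have h2 := hpos (s 1) (s 1) (le_refl _) (hsN 1 (by omega))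
      linarith
    | succ n ih =>
      intro hnm
      have ih' := ih (by omega)
      rw [Finset.sum_range_succ]
      constructor
      · -- n + 1 even, so n odd
        intro he
        have hno : Odd n := by rcases Nat.even_or_odd n with h | h
                               · exact absurd (h.add_one) (by simpa using he)
                               · exact h
        have hn1 : 1 ≤ n := hno.pos
        have h2 : ω (s 1) (s n) + ω (s n) (s (n + 2)) ≤ ω (s 1) (s (n + 2)) :=
          hsup' _ _ _ (hsle 1 n hn1 (by omega)) (hsle n (n + 2) (by omega) (by omega))
            (hsN (n + 2) (by omega))
        have := ih'.2 hno
        linarith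
      · -- n + 1 odd, so n even
        intro ho
        have hne : Even n := by rcases Nat.even_or_odd n with h | h
                                · exact h
                                · exact absurd (h.add_one) (by simpa using ho)
        have h1 : ω (s 0) (s n) + ω (s n) (s (n + 2)) ≤ ω (s 0) (s (n + 2)) :=
          hsup' _ _ _ (hsle 0 n (by omega) (by omega)) (hsle n (n + 2) (by omega) (by omega))
            (hsN (n + 2) (by omega))
        have := ih'.1 hne
        linarith
  -- the total sum is at most `2 ω k l`
  have hA : (∑ j ∈ Finset.range m, ω (s j) (s (j + 2))) ≤ 2 * ω k l := by
    have hkey := key m (le_refl m)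
    have h2 : ω (s 0) (s m) ≤ ω (s 0) (s (m + 1)) :=
      hmono1 _ _ _ (hsle 0 m (by omega) (by omega)) (hsle m (m + 1) (by omega) (le_refl _))
        (hsN (m + 1) (le_refl _))
    have h3 : ω (s 1) (s (m + 1)) ≤ ω (s 0) (s (m + 1)) :=
      hmono2 _ _ _ (hsle 0 1 (by omega) (by omega)) (hsle 1 (m + 1) (by omega) (le_refl _))
        (hsN (m + 1) (le_refl _))
    have h4 : ω (s 1) (s m) ≤ ω (s 0) (s (m + 1)) :=
      le_trans (hmono1 _ _ _ (hsle 1 m hm (by omega)) (hsle m (m + 1) (by omega) (le_refl _))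
        (hsN (m + 1) (le_refl _))) h3
    rw [hs0, hsl] at h2 h3 h4
    have h5 : ω (s 0) (s (m + 1)) = ω k l := by rw [hs0, hsl]
    rcases Nat.even_or_odd m with h | h
    · have := hkey.1 h; rw [hsl] at this; rw [hs0] at this; linarith
    · have := hkey.2 h; rw [hsl] at this; rw [hs0] at this; linarith
  by_contra hcon
  push_neg at hcon
  have hterm : ∀ j ∈ Finset.range m, 2 / (m : ℝ) * ω k l < ω (s j) (s (j + 2)) := by
    intro j hj
    rw [Finset.mem_range] at hj
    have := hcon (j + 1) (by omega) (by omega)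
    simpa using this
  have hlt : (∑ _j ∈ Finset.range m, 2 / (m : ℝ) * ω k l) <
      ∑ j ∈ Finset.range m, ω (s j) (s (j + 2)) :=
    Finset.sum_lt_sum_of_nonempty (by simp; omega) hterm
  rw [Finset.sum_const, Finset.card_range, nsmul_eq_mul] at hlt
  have hm0 : (m : ℝ) ≠ 0 := Nat.cast_ne_zero.mpr (by omega)
  have : (m : ℝ) * (2 / (m : ℝ) * ω k l) = 2 * ω k l := by field_simp
  linarith
end
end

section
/- (Discrete Sewing Lemma.) Let Ξ = (Ξ_{k,l} : 0 ≤ k ≤ l ≤ N) be a triangular array of vectors, and suppose there exist two discrete controls ω, ω̃ and exponents α, β > 0 with α + β > 1 such that |δΞ_{k,l,m}| ≤ ω_{k,l}^α · ω̃_{l,m}^β for all 0 ≤ k < l < m ≤ N. Then for all 0 ≤ k < l ≤ N, |Σ_{j=k}^{l−1} Ξ_{j,j+1} − Ξ_{k,l}| ≤ 2^{α+β} ζ_N(α+β) ω_{k,l}^α ω̃_{k,l}^β, where ζ_N(s) := Σ_{n=1}^N n^{−s}. -/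
noncomputable section

/-- Partial sum `ζ_N(s) = Σ_{n=1}^N n^{-s}` of the Riemann zeta series. -/
def zetaN (N : ℕ) (s : ℝ) : ℝ := ∑ n ∈ Finset.Icc 1 N, (n : ℝ) ^ (-s)


private lemma chain_lt' {t : ℕ → ℕ} {m : ℕ} (h : ∀ i, i < m → t i < t (i+1)) :
    ∀ i j, i < j → j ≤ m → t i < t j := by
  intro i j hij hjm
  induction j with
  | zero => omega
  | succ j ih =>
    rcases Nat.lt_succ_iff_lt_or_eq.mp hij with h' | h'
    · exact lt_trans (ih h' (by omega)) (h j (by omega))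
    · subst h'; exact h i (by omega)

private lemma control_sum' {N : ℕ} {ω : ℕ → ℕ → ℝ} (hω : IsControl N ω) :
    ∀ (m : ℕ) (t : ℕ → ℕ), 1 ≤ m → (∀ i, i < m → t i < t (i+1)) → t m ≤ N →
    ∑ i ∈ Finset.range m, ω (t i) (t (i+1)) ≤ ω (t 0) (t m) := by
  intro m
  induction m with
  | zero => intro t h; omega
  | succ m ih =>
    intro t _ hchain htN
    rcases Nat.eq_zero_or_pos m with hm | hm
    · subst hm; simp
    · have h1 : t m ≤ N := le_trans (hchain m (by omega)).le htN
      have h2 := ih t hm (fun i hi => hchain i (by omega)) h1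
      have h3 := hω.2.2 (t 0) (t m) (t (m+1)) (chain_lt' (m := m+1) hchain 0 m hm (by omega))
        (hchain m (by omega)) htN
      rw [Finset.sum_range_succ]
      linarith

private lemma pigeon' (n : ℕ) (f g : ℕ → ℝ) (W W' : ℝ)
    (hf : ∀ i ∈ Finset.range (n+1), 0 ≤ f i)
    (hg : ∀ i ∈ Finset.range (n+1), 0 ≤ g i)
    (hW : 0 ≤ W) (hW' : 0 ≤ W')
    (hfs : ∑ i ∈ Finset.range (n+1), f i ≤ W)
    (hgs : ∑ i ∈ Finset.range (n+1), g i ≤ W') :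
    ∃ i ∈ Finset.range (n+1), ((n:ℝ)+1) * f i ≤ 2*W ∧ ((n:ℝ)+1) * g i ≤ 2*W' := by
  classical
  by_contra hcon
  push_neg at hcon
  have key : ∀ (h : ℕ → ℝ) (V : ℝ), 0 ≤ V →
      (∀ i ∈ Finset.range (n+1), 0 ≤ h i) →
      (∑ i ∈ Finset.range (n+1), h i ≤ V) →
      2 * ((Finset.range (n+1)).filter (fun i => 2*V < ((n:ℝ)+1) * h i)).card ≤ n := by
    intro h V hV hh hs
    set S := (Finset.range (n+1)).filter (fun i => 2*V < ((n:ℝ)+1) * h i) with hSdef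
    by_contra hc
    push_neg at hc
    have hcard : n + 1 ≤ 2 * S.card := hc
    have hne : S.Nonempty := by rw [← Finset.card_pos]; omega
    have hsub : S ⊆ Finset.range (n+1) := Finset.filter_subset _ _
    have h1 : ∑ _i ∈ S, (2*V) < ∑ i ∈ S, ((n:ℝ)+1) * h i :=
      Finset.sum_lt_sum_of_nonempty hne (fun i hi => (Finset.mem_filter.mp hi).2)
    have h2 : ∑ i ∈ S, ((n:ℝ)+1) * h i ≤ ∑ i ∈ Finset.range (n+1), ((n:ℝ)+1)*h i :=
      Finset.sum_le_sum_of_subset_of_nonneg hsub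
        (fun i hi _ => mul_nonneg (by positivity) (hh i hi))
    have h3 : ∑ i ∈ Finset.range (n+1), ((n:ℝ)+1)*h i ≤ ((n:ℝ)+1) * V := by
      rw [← Finset.mul_sum]
      exact mul_le_mul_of_nonneg_left hs (by positivity)
    have h5 : ∑ _i ∈ S, (2*V) = (S.card : ℝ) * (2*V) := by
      rw [Finset.sum_const, nsmul_eq_mul]
    have h6 : ((n:ℝ)+1) ≤ 2 * (S.card:ℝ) := by exact_mod_cast hcard
    nlinarith
  have hc1 := key f W hW hf hfs
  have hc2 := key g W' hW' hg hgs
  have hsub : Finset.range (n+1) ⊆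
      ((Finset.range (n+1)).filter (fun i => 2*W < ((n:ℝ)+1) * f i)) ∪
      ((Finset.range (n+1)).filter (fun i => 2*W' < ((n:ℝ)+1) * g i)) := by
    intro i hi
    rcases le_or_gt (((n:ℝ)+1) * f i) (2*W) with h | h
    · exact Finset.mem_union_right _ (Finset.mem_filter.mpr ⟨hi, hcon i hi h⟩)
    · exact Finset.mem_union_left _ (Finset.mem_filter.mpr ⟨hi, h⟩)
  have hA := Finset.card_le_card hsub
  have hB := Finset.card_union_le
    ((Finset.range (n+1)).filter (fun i => 2*W < ((n:ℝ)+1) * f i))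
    ((Finset.range (n+1)).filter (fun i => 2*W' < ((n:ℝ)+1) * g i))
  rw [Finset.card_range] at hA
  omega
private lemma sewing_key {E : Type*} [NormedAddCommGroup E]
    (N : ℕ) (Ξ : ℕ → ℕ → E) (ω ω' : ℕ → ℕ → ℝ)
    (hω : IsControl N ω) (hω' : IsControl N ω')
    (α β : ℝ) (hα : 0 < α) (hβ : 0 < β)
    (hδ : ∀ k l m : ℕ, k < l → l < m → m ≤ N →
      ‖Ξ k m - Ξ k l - Ξ l m‖ ≤ ω k l ^ α * ω' l m ^ β) :
    ∀ (n : ℕ) (t : ℕ → ℕ), (∀ i, i < n+1 → t i < t (i+1)) → t (n+1) ≤ N →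
      ‖(∑ i ∈ Finset.range (n+1), Ξ (t i) (t (i+1))) - Ξ (t 0) (t (n+1))‖ ≤
        2 ^ (α+β) * (∑ m ∈ Finset.Icc 1 n, (m:ℝ) ^ (-(α+β))) *
          ω (t 0) (t (n+1)) ^ α * ω' (t 0) (t (n+1)) ^ β := by
  intro n
  induction n with
  | zero =>
    intro t _ _
    simp
  | succ n ih =>
    intro t hchain htN
    have htmono : ∀ i j, i < j → j ≤ n+2 → t i < t j := chain_lt' hchain
    have htle : ∀ j, j ≤ n+2 → t j ≤ N := by
      intro j hj
      rcases eq_or_lt_of_le hj with h | h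
      · rw [h]; exact htN
      · exact le_trans (htmono j (n+2) h le_rfl).le htN
    set W := ω (t 0) (t (n+2)) with hWdef
    set W' := ω' (t 0) (t (n+2)) with hW'def
    have h0n2 : t 0 < t (n+2) := htmono 0 (n+2) (by omega) le_rfl
    have hWnn : 0 ≤ W := hω.1 _ _ h0n2.le (htle _ le_rfl)
    have hW'nn : 0 ≤ W' := hω'.1 _ _ h0n2.le (htle _ le_rfl)
    have hfnn : ∀ i ∈ Finset.range (n+1), 0 ≤ ω (t i) (t (i+1)) := fun i hi =>
      hω.1 _ _ (hchain i (by have := Finset.mem_range.mp hi; omega)).le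
        (htle (i+1) (by have := Finset.mem_range.mp hi; omega))
    have hgnn : ∀ i ∈ Finset.range (n+1), 0 ≤ ω' (t (i+1)) (t (i+2)) := fun i hi =>
      hω'.1 _ _ (hchain (i+1) (by have := Finset.mem_range.mp hi; omega)).le
        (htle (i+2) (by have := Finset.mem_range.mp hi; omega))
    have hsum1 : ∑ i ∈ Finset.range (n+1), ω (t i) (t (i+1)) ≤ W := by
      have h := control_sum' hω (n+1) t (by omega) (fun i hi => hchain i (by omega))
        (htle (n+1) (by omega))
      have h2 := hω.2.2 (t 0) (t (n+1)) (t (n+2)) (htmono 0 (n+1) (by omega) (by omega))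
        (hchain (n+1) (by omega)) (htle _ le_rfl)
      have h3 := hω.1 (t (n+1)) (t (n+2)) (hchain (n+1) (by omega)).le (htle _ le_rfl)
      rw [← hWdef] at h2
      linarith
    have hsum2 : ∑ i ∈ Finset.range (n+1), ω' (t (i+1)) (t (i+2)) ≤ W' := by
      have h := control_sum' hω' (n+1) (fun j => t (j+1)) (by omega)
        (fun i hi => hchain (i+1) (by omega)) (htle (n+2) le_rfl)
      have h2 := hω'.2.2 (t 0) (t 1) (t (n+2)) (hchain 0 (by omega))
        (htmono 1 (n+2) (by omega) le_rfl) (htle _ le_rfl)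
      have h3 := hω'.1 (t 0) (t 1) (hchain 0 (by omega)).le (htle 1 (by omega))
      rw [← hW'def] at h2
      calc ∑ i ∈ Finset.range (n+1), ω' (t (i+1)) (t (i+2)) ≤ ω' (t 1) (t (n+2)) := h
        _ ≤ W' := by linarith
    obtain ⟨i, hi, hfi, hgi⟩ := pigeon' n (fun i => ω (t i) (t (i+1)))
      (fun i => ω' (t (i+1)) (t (i+2))) W W' hfnn hgnn hWnn hW'nn hsum1 hsum2
    have hin : i ≤ n := by have := Finset.mem_range.mp hi; omega
    set t' : ℕ → ℕ := fun j => if j ≤ i then t j else t (j+1) with ht'def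
    have ht'chain : ∀ j, j < n+1 → t' j < t' (j+1) := by
      intro j hj
      by_cases h1 : j+1 ≤ i
      · simp only [ht'def, if_pos h1, if_pos (by omega : j ≤ i)]
        exact hchain j (by omega)
      · by_cases h2 : j ≤ i
        · simp only [ht'def, if_pos h2, if_neg h1]
          exact htmono j (j+1+1) (by omega) (by omega)
        · simp only [ht'def, if_neg h2, if_neg h1]
          exact hchain (j+1) (by omega)
    have ht'N : t' (n+1) ≤ N := by
      simp only [ht'def, if_neg (by omega : ¬ (n+1 ≤ i))]
      exact htN
    have ih' := ih t' ht'chain ht'N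
    have ht'0 : t' 0 = t 0 := by simp [ht'def]
    have ht'top : t' (n+1) = t (n+2) := by
      simp only [ht'def, if_neg (by omega : ¬ (n+1 ≤ i))]
    rw [ht'0, ht'top] at ih'
    -- sum splitting identity
    have e1 : ∑ j ∈ Finset.range (n+2), Ξ (t j) (t (j+1)) =
        ((∑ j ∈ Finset.Ico 0 i, Ξ (t j) (t (j+1))) + (Ξ (t i) (t (i+1)) +
        (Ξ (t (i+1)) (t (i+2)) +
        ∑ j ∈ Finset.Ico (i+2) (n+2), Ξ (t j) (t (j+1))))) := by
      rw [Finset.range_eq_Ico, ← Finset.sum_Ico_consecutive _ (Nat.zero_le i) (by omega : i ≤ n+2),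
        Finset.sum_eq_sum_Ico_succ_bot (by omega : i < n+2),
        Finset.sum_eq_sum_Ico_succ_bot (by omega : i+1 < n+2)]
    have e2 : ∑ j ∈ Finset.range (n+1), Ξ (t' j) (t' (j+1)) =
        ((∑ j ∈ Finset.Ico 0 i, Ξ (t j) (t (j+1))) + (Ξ (t i) (t (i+2)) +
        ∑ j ∈ Finset.Ico (i+2) (n+2), Ξ (t j) (t (j+1)))) := by
      rw [Finset.range_eq_Ico, ← Finset.sum_Ico_consecutive _ (Nat.zero_le i) (by omega : i ≤ n+1),
        Finset.sum_eq_sum_Ico_succ_bot (by omega : i < n+1)]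
      congr 1
      · apply Finset.sum_congr rfl
        intro j hj
        have hj' : j < i := (Finset.mem_Ico.mp hj).2
        simp only [ht'def, if_pos (by omega : j ≤ i), if_pos (by omega : j+1 ≤ i)]
      congr 1
      · simp only [ht'def, if_pos (le_refl i), if_neg (by omega : ¬ (i+1 ≤ i))]
      · rw [Finset.sum_Ico_eq_sum_range (fun j => Ξ (t' j) (t' (j+1))) (i+1) (n+1),
          Finset.sum_Ico_eq_sum_range (fun j => Ξ (t j) (t (j+1))) (i+2) (n+2)]
        have hnum : n+1-(i+1) = n+2-(i+2) := by omega
        rw [hnum]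
        apply Finset.sum_congr rfl
        intro j _
        simp only [ht'def, if_neg (by omega : ¬ (i+1+j ≤ i)), if_neg (by omega : ¬ (i+1+j+1 ≤ i))]
        have ea : i+1+j+1 = i+2+j := by omega
        rw [ea]
    have hsplit : ∑ j ∈ Finset.range (n+2), Ξ (t j) (t (j+1)) =
        (∑ j ∈ Finset.range (n+1), Ξ (t' j) (t' (j+1))) +
        (Ξ (t i) (t (i+1)) + Ξ (t (i+1)) (t (i+2)) - Ξ (t i) (t (i+2))) := by
      rw [e1, e2]; abel
    -- the local deficiency estimate
    have hδi : ‖Ξ (t i) (t (i+1)) + Ξ (t (i+1)) (t (i+2)) - Ξ (t i) (t (i+2))‖ ≤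
        2^(α+β) * ((n:ℝ)+1)^(-(α+β)) * W ^ α * W' ^ β := by
      have hrw : Ξ (t i) (t (i+1)) + Ξ (t (i+1)) (t (i+2)) - Ξ (t i) (t (i+2)) =
          -(Ξ (t i) (t (i+2)) - Ξ (t i) (t (i+1)) - Ξ (t (i+1)) (t (i+2))) := by abel
      rw [hrw, norm_neg]
      have h1 := hδ (t i) (t (i+1)) (t (i+2)) (hchain i (by omega)) (hchain (i+1) (by omega))
        (htle (i+2) (by omega))
      have hf0 : 0 ≤ ω (t i) (t (i+1)) := hfnn i hi
      have hg0 : 0 ≤ ω' (t (i+1)) (t (i+2)) := hgnn i hi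
      have hb1 : ω (t i) (t (i+1)) ≤ 2/((n:ℝ)+1) * W := by
        rw [div_mul_eq_mul_div, le_div_iff₀ (by positivity)]
        nlinarith
      have hb2 : ω' (t (i+1)) (t (i+2)) ≤ 2/((n:ℝ)+1) * W' := by
        rw [div_mul_eq_mul_div, le_div_iff₀ (by positivity)]
        nlinarith
      have hp1 : ω (t i) (t (i+1)) ^ α ≤ (2/((n:ℝ)+1) * W) ^ α :=
        Real.rpow_le_rpow hf0 hb1 hα.le
      have hp2 : ω' (t (i+1)) (t (i+2)) ^ β ≤ (2/((n:ℝ)+1) * W') ^ β :=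
        Real.rpow_le_rpow hg0 hb2 hβ.le
      have hmul : ω (t i) (t (i+1)) ^ α * ω' (t (i+1)) (t (i+2)) ^ β ≤
          (2/((n:ℝ)+1) * W) ^ α * (2/((n:ℝ)+1) * W') ^ β :=
        mul_le_mul hp1 hp2 (Real.rpow_nonneg hg0 β) (Real.rpow_nonneg (by positivity) α)
      have heq : (2/((n:ℝ)+1) * W) ^ α * (2/((n:ℝ)+1) * W') ^ β =
          2^(α+β) * ((n:ℝ)+1)^(-(α+β)) * W ^ α * W' ^ β := by
        rw [Real.mul_rpow (by positivity) hWnn, Real.mul_rpow (by positivity) hW'nn]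
        have hq : ((2:ℝ)/((n:ℝ)+1))^α * ((2:ℝ)/((n:ℝ)+1))^β = ((2:ℝ)/((n:ℝ)+1))^(α+β) :=
          (Real.rpow_add (by positivity) α β).symm
        have hq2 : ((2:ℝ)/((n:ℝ)+1))^(α+β) = 2^(α+β) * ((n:ℝ)+1)^(-(α+β)) := by
          rw [Real.div_rpow (by norm_num) (by positivity), Real.rpow_neg (by positivity),
            div_eq_mul_inv]
        calc (2/((n:ℝ)+1))^α * W^α * ((2/((n:ℝ)+1))^β * W'^β)
            = ((2:ℝ)/((n:ℝ)+1))^α * ((2:ℝ)/((n:ℝ)+1))^β * W^α * W'^β := by ring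
          _ = 2^(α+β) * ((n:ℝ)+1)^(-(α+β)) * W ^ α * W' ^ β := by rw [hq, hq2]
      calc ‖Ξ (t i) (t (i+2)) - Ξ (t i) (t (i+1)) - Ξ (t (i+1)) (t (i+2))‖
          ≤ ω (t i) (t (i+1)) ^ α * ω' (t (i+1)) (t (i+2)) ^ β := h1
        _ ≤ (2/((n:ℝ)+1) * W) ^ α * (2/((n:ℝ)+1) * W') ^ β := hmul
        _ = 2^(α+β) * ((n:ℝ)+1)^(-(α+β)) * W ^ α * W' ^ β := heq
    -- assemble
    show ‖(∑ j ∈ Finset.range (n+2), Ξ (t j) (t (j+1))) - Ξ (t 0) (t (n+2))‖ ≤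
        2 ^ (α+β) * (∑ m ∈ Finset.Icc 1 (n+1), (m:ℝ) ^ (-(α+β))) * W ^ α * W' ^ β
    calc ‖(∑ j ∈ Finset.range (n+2), Ξ (t j) (t (j+1))) - Ξ (t 0) (t (n+2))‖
        = ‖((∑ j ∈ Finset.range (n+1), Ξ (t' j) (t' (j+1))) - Ξ (t 0) (t (n+2))) +
          (Ξ (t i) (t (i+1)) + Ξ (t (i+1)) (t (i+2)) - Ξ (t i) (t (i+2)))‖ := by
          rw [hsplit]; congr 1; abel
      _ ≤ ‖(∑ j ∈ Finset.range (n+1), Ξ (t' j) (t' (j+1))) - Ξ (t 0) (t (n+2))‖ +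
          ‖Ξ (t i) (t (i+1)) + Ξ (t (i+1)) (t (i+2)) - Ξ (t i) (t (i+2))‖ := norm_add_le _ _
      _ ≤ 2 ^ (α+β) * (∑ m ∈ Finset.Icc 1 n, (m:ℝ) ^ (-(α+β))) * W ^ α * W' ^ β +
          2^(α+β) * ((n:ℝ)+1)^(-(α+β)) * W ^ α * W' ^ β := add_le_add ih' hδi
      _ = 2 ^ (α+β) * ((∑ m ∈ Finset.Icc 1 n, (m:ℝ) ^ (-(α+β))) + ((n:ℝ)+1)^(-(α+β))) *
          W ^ α * W' ^ β := by ring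
      _ = 2 ^ (α+β) * (∑ m ∈ Finset.Icc 1 (n+1), (m:ℝ) ^ (-(α+β))) * W ^ α * W' ^ β := by
          rw [Finset.sum_Icc_succ_top (by omega : 1 ≤ n+1)]
          push_cast
          ring
/-- Discrete Sewing Lemma. -/
theorem discrete_sewing {E : Type*} [NormedAddCommGroup E]
    (N : ℕ) (Ξ : ℕ → ℕ → E)
    (ω ω' : ℕ → ℕ → ℝ) (hω : IsControl N ω) (hω' : IsControl N ω')
    (α β : ℝ) (hα : 0 < α) (hβ : 0 < β) (hαβ : 1 < α + β)
    (hδ : ∀ k l m : ℕ, k < l → l < m → m ≤ N →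
      ‖Ξ k m - Ξ k l - Ξ l m‖ ≤ ω k l ^ α * ω' l m ^ β) :
    ∀ k l : ℕ, k < l → l ≤ N →
      ‖(∑ j ∈ Finset.Ico k l, Ξ j (j + 1)) - Ξ k l‖ ≤
        2 ^ (α + β) * zetaN N (α + β) * ω k l ^ α * ω' k l ^ β := by
  intro k l hkl hlN
  obtain ⟨n, hn⟩ : ∃ n, l - k = n + 1 := ⟨l - k - 1, by omega⟩
  have key : ‖(∑ i ∈ Finset.range (n+1), Ξ (k+i) (k+i+1)) - Ξ k (k+(n+1))‖ ≤
      2^(α+β) * (∑ m ∈ Finset.Icc 1 n, (m:ℝ)^(-(α+β))) *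
        ω k (k+(n+1)) ^ α * ω' k (k+(n+1)) ^ β :=
    sewing_key N Ξ ω ω' hω hω' α β hα hβ hδ n (fun j => k+j)
      (fun i _ => by show k + i < k + (i+1); omega)
      (by show k + (n+1) ≤ N; omega)
  rw [show k+(n+1) = l by omega] at key
  have hs : ∑ j ∈ Finset.Ico k l, Ξ j (j + 1) =
      ∑ i ∈ Finset.range (n+1), Ξ (k+i) (k+i+1) := by
    rw [Finset.sum_Ico_eq_sum_range (fun j => Ξ j (j+1)) k l, hn]
  rw [hs]
  refine le_trans key ?_
  have h1 : (∑ m ∈ Finset.Icc 1 n, (m:ℝ)^(-(α+β))) ≤ zetaN N (α+β) :=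
    Finset.sum_le_sum_of_subset_of_nonneg
      (Finset.Icc_subset_Icc le_rfl (by omega))
      (fun i _ _ => Real.rpow_nonneg (Nat.cast_nonneg i) _)
  have h2 : 0 ≤ ω k l ^ α := Real.rpow_nonneg (hω.1 k l hkl.le hlN) α
  have h3 : 0 ≤ ω' k l ^ β := Real.rpow_nonneg (hω'.1 k l hkl.le hlN) β
  have h4 : (0:ℝ) ≤ 2 ^ (α+β) := (Real.rpow_pos_of_pos (by norm_num) _).le
  calc 2^(α+β) * (∑ m ∈ Finset.Icc 1 n, (m:ℝ)^(-(α+β))) * ω k l ^ α * ω' k l ^ β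
      ≤ 2^(α+β) * zetaN N (α+β) * ω k l ^ α * ω' k l ^ β := by
        apply mul_le_mul_of_nonneg_right _ h3
        apply mul_le_mul_of_nonneg_right _ h2
        exact mul_le_mul_of_nonneg_left h1 h4
end
end

section
/- Let p ≥ 1, let f : R^n → R^n be of class C²_b, and let x, x̃ be two time series in R^n. Then ||f(x) − f(x̃)||_{p;[k,l]} ≤ 2^{(p−1)/p} ||f||_{C²_b} ( ||x − x̃||^p_{p;[k,l]} + ||x̃||^p_{p;[k,l]} · ||x − x̃||^p_{∞;[0,l]} )^{1/p}, where f(x) denotes the time series (f(x_0), ..., f(x_N)) and ||y||_{∞;[0,l]} := max_{j=0,...,l} |y_j|. -/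
noncomputable section

/-- The `C²_b` norm of a map: the maximum of the sup norms of its first and second
derivatives. -/
def C2bNorm {E F : Type*} [NormedAddCommGroup E] [NormedSpace ℝ E]
    [NormedAddCommGroup F] [NormedSpace ℝ F] (f : E → F) : ℝ :=
  max (⨆ y, ‖iteratedFDeriv ℝ 1 f y‖) (⨆ y, ‖iteratedFDeriv ℝ 2 f y‖)


section Aux
open NNReal in
lemma two_rpow_ineq (a b : ℝ) (ha : 0 ≤ a) (hb : 0 ≤ b) (p : ℝ) (hp : 1 ≤ p) :
    (a + b) ^ p ≤ 2 ^ (p - 1) * (a ^ p + b ^ p) := by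
  have h := NNReal.rpow_add_le_mul_rpow_add_rpow a.toNNReal b.toNNReal hp
  have h' := NNReal.coe_le_coe.2 h
  push_cast at h'
  rw [Real.coe_toNNReal a ha, Real.coe_toNNReal b hb] at h'
  exact h'

variable {E F : Type*} [NormedAddCommGroup E] [NormedSpace ℝ E]
  [NormedAddCommGroup F] [NormedSpace ℝ F]

lemma norm_fderiv_le_iter_one (g : E → F) (w : E) :
    ‖fderiv ℝ g w‖ ≤ ‖iteratedFDeriv ℝ 1 g w‖ := by
  apply ContinuousLinearMap.opNorm_le_bound _ (norm_nonneg _)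
  intro v
  have h : fderiv ℝ g w v = iteratedFDeriv ℝ 1 g w (fun _ => v) :=
    (iteratedFDeriv_one_apply (fun _ => v)).symm
  rw [h]
  calc ‖iteratedFDeriv ℝ 1 g w fun _ => v‖
      ≤ ‖iteratedFDeriv ℝ 1 g w‖ * ∏ _i : Fin 1, ‖v‖ :=
        (iteratedFDeriv ℝ 1 g w).le_opNorm _
    _ = ‖iteratedFDeriv ℝ 1 g w‖ * ‖v‖ := by simp

/-- Lipschitz bound for `fderiv` from a bound on the second iterated derivative. -/
lemma fderiv_lip (f : E → F) (hf : ContDiff ℝ 2 f) (C2 : ℝ)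
    (h2 : ∀ y, ‖iteratedFDeriv ℝ 2 f y‖ ≤ C2) (y z : E) :
    ‖fderiv ℝ f y - fderiv ℝ f z‖ ≤ C2 * ‖y - z‖ := by
  have hd : ContDiff ℝ 1 (fderiv ℝ f) := hf.fderiv_right (m := 1) (by norm_num)
  have key : ∀ w, ‖fderiv ℝ (fderiv ℝ f) w‖ ≤ C2 := fun w =>
    ((norm_fderiv_le_iter_one _ w).trans_eq norm_iteratedFDeriv_fderiv).trans (h2 w)
  exact (convex_univ (𝕜 := ℝ) (E := E)).norm_image_sub_le_of_norm_fderiv_le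
    (fun w _ => hd.differentiable (by norm_num) w) (fun w _ => key w)
    (Set.mem_univ z) (Set.mem_univ y)

/-- Key pointwise estimate. -/
lemma key_est (f : E → F) (hf : ContDiff ℝ 2 f) (C1 C2 M : ℝ)
    (hC2 : 0 ≤ C2) (h1 : ∀ y, ‖fderiv ℝ f y‖ ≤ C1)
    (h2 : ∀ y z, ‖fderiv ℝ f y - fderiv ℝ f z‖ ≤ C2 * ‖y - z‖)
    (a b a' b' : E) (ha : ‖a - a'‖ ≤ M) (hb : ‖b - b'‖ ≤ M) :
    ‖(f b - f b') - (f a - f a')‖ ≤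
      C1 * ‖(b - b') - (a - a')‖ + C2 * M * ‖b' - a'‖ := by
  set u : ℝ → E := fun s => a + s • (b - a) with hu
  set v : ℝ → E := fun s => a' + s • (b' - a') with hv
  set g : ℝ → F := fun s => f (u s) - f (v s) with hg
  have hdiff : Differentiable ℝ f := hf.differentiable (by norm_num)
  have hderiv : ∀ s : ℝ, HasDerivAt g
      (fderiv ℝ f (u s) (b - a) - fderiv ℝ f (v s) (b' - a')) s := by
    intro s
    have hu' : HasDerivAt u (b - a) s := by
      simpa [hu] using ((hasDerivAt_id s).smul_const (b - a)).const_add a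
    have hv' : HasDerivAt v (b' - a') s := by
      simpa [hv] using ((hasDerivAt_id s).smul_const (b' - a')).const_add a'
    exact ((hdiff (u s)).hasFDerivAt.comp_hasDerivAt s hu').sub
      ((hdiff (v s)).hasFDerivAt.comp_hasDerivAt s hv')
  have hM : 0 ≤ M := le_trans (norm_nonneg _) ha
  have bound : ∀ s ∈ Set.Icc (0:ℝ) 1,
      ‖fderiv ℝ f (u s) (b - a) - fderiv ℝ f (v s) (b' - a')‖ ≤
        C1 * ‖(b - b') - (a - a')‖ + C2 * M * ‖b' - a'‖ := by
    intro s hs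
    have hsplit : fderiv ℝ f (u s) (b - a) - fderiv ℝ f (v s) (b' - a') =
        fderiv ℝ f (u s) ((b - b') - (a - a')) +
          (fderiv ℝ f (u s) - fderiv ℝ f (v s)) (b' - a') := by
      have : (b : E) - a = ((b - b') - (a - a')) + (b' - a') := by abel
      rw [this, map_add]
      simp [ContinuousLinearMap.sub_apply]
      abel
    rw [hsplit]
    have huv : ‖u s - v s‖ ≤ M := by
      have : u s - v s = (1 - s) • (a - a') + s • (b - b') := by
        simp [hu, hv, smul_sub, sub_smul]; abel
      rw [this]
      calc ‖(1 - s) • (a - a') + s • (b - b')‖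
          ≤ ‖(1 - s) • (a - a')‖ + ‖s • (b - b')‖ := norm_add_le _ _
        _ = (1 - s) * ‖a - a'‖ + s * ‖b - b'‖ := by
            rw [norm_smul, norm_smul, Real.norm_of_nonneg (by linarith [hs.2]),
              Real.norm_of_nonneg hs.1]
        _ ≤ (1 - s) * M + s * M := by
            have h0 : (0:ℝ) ≤ 1 - s := by linarith [hs.2]
            exact add_le_add (mul_le_mul_of_nonneg_left ha h0)
              (mul_le_mul_of_nonneg_left hb hs.1)
        _ = M := by ring
    calc ‖fderiv ℝ f (u s) ((b - b') - (a - a')) +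
          (fderiv ℝ f (u s) - fderiv ℝ f (v s)) (b' - a')‖
        ≤ ‖fderiv ℝ f (u s) ((b - b') - (a - a'))‖ +
          ‖(fderiv ℝ f (u s) - fderiv ℝ f (v s)) (b' - a')‖ := norm_add_le _ _
      _ ≤ ‖fderiv ℝ f (u s)‖ * ‖(b - b') - (a - a')‖ +
          ‖fderiv ℝ f (u s) - fderiv ℝ f (v s)‖ * ‖b' - a'‖ :=
          add_le_add ((fderiv ℝ f (u s)).le_opNorm _)
            ((fderiv ℝ f (u s) - fderiv ℝ f (v s)).le_opNorm _)
      _ ≤ C1 * ‖(b - b') - (a - a')‖ + (C2 * ‖u s - v s‖) * ‖b' - a'‖ :=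
          add_le_add (mul_le_mul_of_nonneg_right (h1 _) (norm_nonneg _))
            (mul_le_mul_of_nonneg_right (h2 _ _) (norm_nonneg _))
      _ ≤ C1 * ‖(b - b') - (a - a')‖ + C2 * M * ‖b' - a'‖ := by
          gcongr
  have hfin : ‖g 1 - g 0‖ ≤ C1 * ‖(b - b') - (a - a')‖ + C2 * M * ‖b' - a'‖ :=
    norm_image_sub_le_of_norm_deriv_le_segment_01'
      (fun s hs => (hderiv s).hasDerivWithinAt)
      (fun s hs => bound s (Set.Ico_subset_Icc_self hs))
  have hg1 : g 1 = f b - f b' := by simp [hg, hu, hv]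
  have hg0 : g 0 = f a - f a' := by simp [hg, hu, hv]
  rwa [hg1, hg0] at hfin

lemma le_last_of_chain' : ∀ (s : List ℕ) (l : ℕ), s.Chain' (· < ·) →
    s.getLast? = some l → ∀ a ∈ s, a ≤ l := by
  intro s
  induction s with
  | nil => intro l _ h; simp at h
  | cons x t ih =>
    intro l hc hl a ha
    cases t with
    | nil =>
      simp only [List.getLast?_singleton, Option.some.injEq] at hl
      simp only [List.mem_singleton] at ha
      omega
    | cons y t' =>
      rw [List.getLast?_cons_cons] at hl
      have hc' : (y :: t').Chain' (· < ·) := hc.tail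
      have hy : y ≤ l := ih l hc' hl y List.mem_cons_self
      rcases List.mem_cons.mp ha with rfl | ha'
      · have hxy : a < y := (List.isChain_cons_cons.mp hc).1
        omega
      · exact ih l hc' hl a ha'

lemma mem_zip_tail : ∀ (s : List ℕ), s.Chain' (· < ·) →
    ∀ ab ∈ s.zip s.tail, ab.1 ∈ s ∧ ab.2 ∈ s ∧ ab.1 < ab.2 := by
  intro s
  induction s with
  | nil => intro _ ab hab; simp at hab
  | cons x t ih =>
    intro hc ab hab
    cases t with
    | nil => simp at hab
    | cons y t' =>
      have hab' : ab = (x, y) ∨ ab ∈ (y :: t').zip ((y :: t').tail) := by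
        exact List.mem_cons.mp hab
      rcases hab' with rfl | h'
      · exact ⟨List.mem_cons_self, List.mem_cons_of_mem _ List.mem_cons_self,
          (List.isChain_cons_cons.mp hc).1⟩
      · obtain ⟨h1, h2, h3⟩ := ih hc.tail ab h'
        exact ⟨List.mem_cons_of_mem _ h1, List.mem_cons_of_mem _ h2, h3⟩

/-- The partition set in `pVarSum`. -/
def PartSet {E : Type*} [NormedAddCommGroup E] (p : ℝ) (Ξ : ℕ → ℕ → E) (k l : ℕ) : Set ℝ :=
  { x : ℝ | ∃ s : List ℕ, (s.Chain' (· < ·) ∧ s.head? = some k ∧ s.getLast? = some l) ∧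
    x = ((s.zip s.tail).map fun ab => ‖Ξ ab.1 ab.2‖ ^ p).sum }

lemma part_length_le {s : List ℕ} {l : ℕ}
    (hc : s.Chain' (· < ·)) (hl : s.getLast? = some l) : s.length ≤ l + 1 := by
  have hnd : s.Nodup := List.Pairwise.imp ne_of_lt (List.isChain_iff_pairwise.mp hc)
  have hsub : s.toFinset ⊆ Finset.Icc 0 l := by
    intro a ha
    simp only [List.mem_toFinset] at ha
    simp [le_last_of_chain' s l hc hl a ha]
  calc s.length = s.toFinset.card := (List.toFinset_card_of_nodup hnd).symm
    _ ≤ (Finset.Icc 0 l).card := Finset.card_le_card hsub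
    _ = l + 1 := by simp

lemma PartSet_nonneg {E : Type*} [NormedAddCommGroup E] (p : ℝ) (Ξ : ℕ → ℕ → E) (k l : ℕ) :
    ∀ x ∈ PartSet p Ξ k l, 0 ≤ x := by
  rintro x ⟨s, _, rfl⟩
  apply List.sum_nonneg
  intro a ha
  obtain ⟨ab, _, rfl⟩ := List.mem_map.mp ha
  exact Real.rpow_nonneg (norm_nonneg _) p

lemma PartSet_bddAbove {E : Type*} [NormedAddCommGroup E] (p : ℝ) (Ξ : ℕ → ℕ → E) (k l : ℕ) :
    BddAbove (PartSet p Ξ k l) := by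
  classical
  set T : ℝ := ((Finset.Icc 0 l ×ˢ Finset.Icc 0 l).sup' ⟨(0,0), by simp⟩
    fun ab => ‖Ξ ab.1 ab.2‖ ^ p) with hT
  refine ⟨(l + 1 : ℕ) * T, ?_⟩
  rintro x ⟨s, ⟨hc, _, hl⟩, rfl⟩
  have hlen : (s.zip s.tail).length ≤ l + 1 := by
    calc (s.zip s.tail).length ≤ s.length := by
          rw [List.length_zip]; exact min_le_left _ _
      _ ≤ l + 1 := part_length_le hc hl
  have hterm : ∀ y ∈ (s.zip s.tail).map fun ab => ‖Ξ ab.1 ab.2‖ ^ p, y ≤ T := by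
    intro y hy
    obtain ⟨ab, hab, rfl⟩ := List.mem_map.mp hy
    obtain ⟨h1, h2, _⟩ := mem_zip_tail s hc ab hab
    have m1 : ab.1 ≤ l := le_last_of_chain' s l hc hl _ h1
    have m2 : ab.2 ≤ l := le_last_of_chain' s l hc hl _ h2
    exact Finset.le_sup' (b := ab) (fun ab : ℕ × ℕ => ‖Ξ ab.1 ab.2‖ ^ p)
      (by simp only [Finset.mem_product, Finset.mem_Icc]; omega)
  have hT0 : (0:ℝ) ≤ T := le_trans (Real.rpow_nonneg (norm_nonneg (Ξ 0 0)) p)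
    (Finset.le_sup' (b := ((0:ℕ),(0:ℕ))) (fun ab : ℕ × ℕ => ‖Ξ ab.1 ab.2‖ ^ p)
      (by simp only [Finset.mem_product, Finset.mem_Icc]; omega))
  calc ((s.zip s.tail).map fun ab => ‖Ξ ab.1 ab.2‖ ^ p).sum
      ≤ ((s.zip s.tail).map fun ab => ‖Ξ ab.1 ab.2‖ ^ p).length • T :=
        List.sum_le_card_nsmul _ _ hterm
    _ = ((s.zip s.tail).length : ℝ) * T := by rw [List.length_map]; simp [nsmul_eq_mul]
    _ ≤ (l + 1 : ℕ) * T := by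
        apply mul_le_mul_of_nonneg_right _ hT0
        exact_mod_cast hlen

lemma PartSet_nonempty {E : Type*} [NormedAddCommGroup E] (p : ℝ) (Ξ : ℕ → ℕ → E) (k l : ℕ)
    (hkl : k ≤ l) : (PartSet p Ξ k l).Nonempty := by
  rcases eq_or_lt_of_le hkl with rfl | h
  · exact ⟨_, [k], ⟨List.isChain_singleton k, by simp, by simp⟩, rfl⟩
  · exact ⟨_, [k, l], ⟨List.isChain_pair.mpr h, by simp, by simp⟩, rfl⟩


lemma list_sum_le {α : Type*} (L : List α) (F G : α → ℝ) (h : ∀ a ∈ L, F a ≤ G a) :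
    (L.map F).sum ≤ (L.map G).sum := by
  induction L with
  | nil => simp
  | cons a t ih =>
    simp only [List.map_cons, List.sum_cons]
    exact add_le_add (h a List.mem_cons_self)
      (ih fun b hb => h b (List.mem_cons_of_mem _ hb))

lemma list_sum_comb {α : Type*} (L : List α) (F G : α → ℝ) (c d : ℝ) :
    (L.map fun a => c * F a + d * G a).sum = c * (L.map F).sum + d * (L.map G).sum := by
  induction L with
  | nil => simp
  | cons a t ih => simp [ih]; ring

lemma pVarSum_eq_sSup_PartSet {E : Type*} [NormedAddCommGroup E] (p : ℝ) (Ξ : ℕ → ℕ → E)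
    (k l : ℕ) : pVarSum p Ξ k l = sSup (PartSet p Ξ k l) := rfl

lemma pVarSum_nonneg {E : Type*} [NormedAddCommGroup E] (p : ℝ) (Ξ : ℕ → ℕ → E) (k l : ℕ) :
    0 ≤ pVarSum p Ξ k l := by
  rw [pVarSum_eq_sSup_PartSet]
  exact Real.sSup_nonneg (PartSet_nonneg p Ξ k l)

lemma pVarSeq_rpow {E : Type*} [NormedAddCommGroup E] (p : ℝ) (hp : 1 ≤ p) (y : ℕ → E)
    (k l : ℕ) : pVarSeq p y k l ^ p = pVarSum p (fun a b => y b - y a) k l := by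
  have hp0 : p ≠ 0 := by positivity
  rw [pVarSeq, pVar, ← Real.rpow_mul (pVarSum_nonneg _ _ _ _), one_div_mul_cancel hp0,
    Real.rpow_one]

end Aux

/-- `p`-variation bound for the difference `f(x) − f(x̃)` of a `C²_b` function applied
to two time series. -/
theorem pvar_comp_diff_bound (n N : ℕ) (p : ℝ) (hp : 1 ≤ p)
    (f : (Fin n → ℝ) → (Fin n → ℝ)) (hf : ContDiff ℝ 2 f)
    (hfb : ∀ j : ℕ, j ≤ 2 → ∃ C : ℝ, ∀ y, ‖iteratedFDeriv ℝ j f y‖ ≤ C)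
    (x x' : ℕ → Fin n → ℝ) :
    ∀ k l : ℕ, k ≤ l → l ≤ N →
      pVarSeq p (fun j => f (x j) - f (x' j)) k l ≤
        2 ^ ((p - 1) / p) * C2bNorm f *
          (pVarSeq p (fun j => x j - x' j) k l ^ p +
            pVarSeq p x' k l ^ p *
              ((Finset.Icc 0 l).sup' ⟨0, by simp⟩ fun j => ‖x j - x' j‖) ^ p) ^ (1 / p) := by
  intro k l hkl _
  have hp0 : (0:ℝ) < p := lt_of_lt_of_le one_pos hp
  set C := C2bNorm f with hC
  -- bounds on derivatives
  obtain ⟨C1', hC1'⟩ := hfb 1 (by norm_num)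
  obtain ⟨C2', hC2'⟩ := hfb 2 le_rfl
  have hb1 : ∀ y, ‖iteratedFDeriv ℝ 1 f y‖ ≤ C := fun y =>
    le_trans (le_ciSup ⟨C1', by rintro _ ⟨z, rfl⟩; exact hC1' z⟩ y) (le_max_left _ _)
  have hb2 : ∀ y, ‖iteratedFDeriv ℝ 2 f y‖ ≤ C := fun y =>
    le_trans (le_ciSup ⟨C2', by rintro _ ⟨z, rfl⟩; exact hC2' z⟩ y) (le_max_right _ _)
  have hC0 : 0 ≤ C := le_trans (norm_nonneg _) (hb1 0)
  have h1 : ∀ y, ‖fderiv ℝ f y‖ ≤ C := fun y => (norm_fderiv_le_iter_one f y).trans (hb1 y)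
  have h2 : ∀ y z, ‖fderiv ℝ f y - fderiv ℝ f z‖ ≤ C * ‖y - z‖ := fderiv_lip f hf C hb2
  set M := (Finset.Icc 0 l).sup' ⟨0, by simp⟩ fun j => ‖x j - x' j‖ with hM
  have hMj : ∀ j, j ≤ l → ‖x j - x' j‖ ≤ M := fun j hj =>
    Finset.le_sup' (b := j) (fun j => ‖x j - x' j‖) (by simp [hj])
  have hM0 : 0 ≤ M := le_trans (norm_nonneg _) (hMj 0 (Nat.zero_le l))
  -- the three triangular arrays
  set Ξf : ℕ → ℕ → (Fin n → ℝ) :=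
    fun a b => (f (x b) - f (x' b)) - (f (x a) - f (x' a)) with hΞf
  set ΞD : ℕ → ℕ → (Fin n → ℝ) :=
    fun a b => (x b - x' b) - (x a - x' a) with hΞD
  set Ξx : ℕ → ℕ → (Fin n → ℝ) := fun a b => x' b - x' a with hΞx
  set SA := pVarSum p ΞD k l with hSA
  set SB := pVarSum p Ξx k l with hSB
  have hSA0 : 0 ≤ SA := pVarSum_nonneg _ _ _ _
  have hSB0 : 0 ≤ SB := pVarSum_nonneg _ _ _ _
  set c : ℝ := 2 ^ (p - 1) * C ^ p with hc
  have hc0 : 0 ≤ c := mul_nonneg (Real.rpow_nonneg (by norm_num) _)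
    (Real.rpow_nonneg hC0 _)
  -- pointwise estimate
  have hterm : ∀ a b : ℕ, a ≤ l → b ≤ l →
      ‖Ξf a b‖ ^ p ≤ c * ‖ΞD a b‖ ^ p + (c * M ^ p) * ‖Ξx a b‖ ^ p := by
    intro a b hal hbl
    have hkey := key_est f hf C C M hC0 h1 h2 (x a) (x b) (x' a) (x' b)
      (hMj a hal) (hMj b hbl)
    have hpt : ‖Ξf a b‖ ≤ C * (‖ΞD a b‖ + M * ‖Ξx a b‖) := by
      have : C * (‖ΞD a b‖ + M * ‖Ξx a b‖)
          = C * ‖ΞD a b‖ + C * M * ‖Ξx a b‖ := by ring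
      rw [this]
      simpa [hΞf, hΞD, hΞx] using hkey
    calc ‖Ξf a b‖ ^ p ≤ (C * (‖ΞD a b‖ + M * ‖Ξx a b‖)) ^ p :=
          Real.rpow_le_rpow (norm_nonneg _) hpt hp0.le
      _ = C ^ p * (‖ΞD a b‖ + M * ‖Ξx a b‖) ^ p :=
          Real.mul_rpow hC0 (by positivity)
      _ ≤ C ^ p * (2 ^ (p - 1) * (‖ΞD a b‖ ^ p + (M * ‖Ξx a b‖) ^ p)) := by
          apply mul_le_mul_of_nonneg_left _ (Real.rpow_nonneg hC0 p)
          exact two_rpow_ineq _ _ (norm_nonneg _) (by positivity) p hp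
      _ = c * ‖ΞD a b‖ ^ p + (c * M ^ p) * ‖Ξx a b‖ ^ p := by
          rw [Real.mul_rpow hM0 (norm_nonneg _), hc]; ring
  -- per partition estimate
  have hpartsum : ∀ s : List ℕ, IsPart k l s →
      ((s.zip s.tail).map fun ab => ‖Ξf ab.1 ab.2‖ ^ p).sum ≤ c * SA + (c * M ^ p) * SB := by
    intro s hs
    obtain ⟨hchain, hhead, hlast⟩ := hs
    have step1 : ((s.zip s.tail).map fun ab => ‖Ξf ab.1 ab.2‖ ^ p).sum ≤
        ((s.zip s.tail).map fun ab =>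
          c * ‖ΞD ab.1 ab.2‖ ^ p + (c * M ^ p) * ‖Ξx ab.1 ab.2‖ ^ p).sum := by
      apply list_sum_le
      intro ab hab
      obtain ⟨h1', h2', _⟩ := mem_zip_tail s hchain ab hab
      exact hterm ab.1 ab.2 (le_last_of_chain' s l hchain hlast _ h1')
        (le_last_of_chain' s l hchain hlast _ h2')
    rw [list_sum_comb] at step1
    have memA : ((s.zip s.tail).map fun ab => ‖ΞD ab.1 ab.2‖ ^ p).sum ∈ PartSet p ΞD k l :=
      ⟨s, ⟨hchain, hhead, hlast⟩, rfl⟩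
    have memB : ((s.zip s.tail).map fun ab => ‖Ξx ab.1 ab.2‖ ^ p).sum ∈ PartSet p Ξx k l :=
      ⟨s, ⟨hchain, hhead, hlast⟩, rfl⟩
    have hA : ((s.zip s.tail).map fun ab => ‖ΞD ab.1 ab.2‖ ^ p).sum ≤ SA :=
      le_csSup (PartSet_bddAbove p ΞD k l) memA
    have hB : ((s.zip s.tail).map fun ab => ‖Ξx ab.1 ab.2‖ ^ p).sum ≤ SB :=
      le_csSup (PartSet_bddAbove p Ξx k l) memB
    calc _ ≤ c * ((s.zip s.tail).map fun ab => ‖ΞD ab.1 ab.2‖ ^ p).sum +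
          (c * M ^ p) * ((s.zip s.tail).map fun ab => ‖Ξx ab.1 ab.2‖ ^ p).sum := step1
      _ ≤ c * SA + (c * M ^ p) * SB := by
          apply add_le_add (mul_le_mul_of_nonneg_left hA hc0)
            (mul_le_mul_of_nonneg_left hB (by positivity))
  -- sup over partitions
  have hS : pVarSum p Ξf k l ≤ c * SA + (c * M ^ p) * SB := by
    rw [pVarSum_eq_sSup_PartSet]
    apply csSup_le (PartSet_nonempty p Ξf k l hkl)
    rintro z ⟨s, hs, rfl⟩
    exact hpartsum s hs
  -- conclusion
  have lhs_eq : pVarSeq p (fun j => f (x j) - f (x' j)) k l = pVarSum p Ξf k l ^ (1 / p) := rfl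
  have rhsA : pVarSeq p (fun j => x j - x' j) k l ^ p = SA := pVarSeq_rpow p hp _ k l
  have rhsB : pVarSeq p x' k l ^ p = SB := pVarSeq_rpow p hp _ k l
  rw [lhs_eq, rhsA, rhsB]
  have key : pVarSum p Ξf k l ^ (1 / p) ≤ (c * SA + (c * M ^ p) * SB) ^ (1 / p) :=
    Real.rpow_le_rpow (pVarSum_nonneg _ _ _ _) hS (by positivity)
  refine key.trans (le_of_eq ?_)
  have hfact : c * SA + (c * M ^ p) * SB = c * (SA + SB * M ^ p) := by ring
  rw [hfact, hc, Real.mul_rpow (by positivity) (by positivity),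
    Real.mul_rpow (Real.rpow_nonneg (by norm_num) _) (Real.rpow_nonneg hC0 _),
    ← Real.rpow_mul (by norm_num : (0:ℝ) ≤ 2), ← Real.rpow_mul hC0,
    mul_one_div (p - 1) p, mul_one_div_cancel (ne_of_gt hp0), Real.rpow_one]
end
end
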